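/- Let Γ be the Petersen graph realized as the Kneser graph KG_{5,2}. Every graph homomorphism from Γ to itself is a graph automorphism; that is, if f : V(Γ) → V(Γ) satisfies f(u) ∼ f(v) whenever u ∼ v, then f is a bijection and f(u) ∼ f(v) if and only if u ∼ v. -/

import Mathlib

noncomputable section

/-- Vertices of the Kneser graph `KG_{5,2}`: the 2-element subsets of `{1,…,5}`. -/
abbrev KVertex : Type := {s : Finset (Fin 5) // s.card = 2}

/-- The Petersen graph, realized as the Kneser graph `KG_{5,2}`:
two 2-element subsets are adjacent iff they are disjoint. -/
def petersen : SimpleGraph KVertex where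
  Adj u v := Disjoint u.1 v.1
  symm := ⟨fun _ _ h => h.symm⟩
  loopless := by
    constructor
    intro v h
    have hv := v.2
    rw [disjoint_self.mp h] at hv
    simp at hv

end

/-!
An endomorphism `f` of the Petersen graph is injective: adjacent vertices have adjacent, hence
distinct, images, and two distinct nonadjacent vertices `u`, `v` are joined by a path of length
three, which `f u = f v` would fold into a triangle; but the graph is triangle-free, as three
pairwise disjoint 2-subsets would need six points. An injective endomorphism of a finite graph
is bijective on vertices and, being injective on the finite edge set, also surjective on edges,
so it reflects adjacency.
-/

instance : DecidableRel petersen.Adj := fun u v =>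
  inferInstanceAs (Decidable (Disjoint u.1 v.1))

namespace SimpleGraph

variable {V W : Type*} {G : SimpleGraph V} {H : SimpleGraph W}

theorem Hom.injective_of_cliqueFree_three (f : G →g H) (hH : H.CliqueFree 3)
    (hG : ∀ u v, u ≠ v → ¬ G.Adj u v → ∃ x y, G.Adj v x ∧ G.Adj x y ∧ G.Adj y u) :
    Function.Injective f := by
  classical
  intro u v huv
  by_contra hne
  by_cases hadj : G.Adj u v
  · exact (f.map_adj hadj).ne huv
  · obtain ⟨x, y, hvx, hxy, hyu⟩ := hG u v hne hadj
    have hyv : H.Adj (f v) (f y) := huv ▸ (f.map_adj hyu).symm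
    exact hH {f v, f x, f y} (is3Clique_triple_iff.mpr ⟨f.map_adj hvx, hyv, f.map_adj hxy⟩)

theorem Hom.adj_iff_of_injective [Finite V] (f : G →g G) (hf : Function.Injective f) {u v : V} :
    G.Adj (f u) (f v) ↔ G.Adj u v := by
  refine ⟨fun h => ?_, f.map_adj⟩
  have hsurj : Function.Surjective f.mapEdgeSet :=
    Finite.injective_iff_surjective.mp (Hom.mapEdgeSet.injective f hf)
  obtain ⟨⟨e, heG⟩, hfe⟩ := hsurj ⟨s(f u, f v), h⟩
  have he : e = s(u, v) := Sym2.map.injective hf (congrArg Subtype.val hfe)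
  rwa [he] at heG

end SimpleGraph

theorem petersen_cliqueFree_three : petersen.CliqueFree 3 := by
  intro s hs
  obtain ⟨a, b, c, hab, hac, hbc, -⟩ := SimpleGraph.is3Clique_iff.mp hs
  have hcard : (a.1 ∪ b.1 ∪ c.1).card = 6 := by
    rw [Finset.card_union_of_disjoint (Finset.disjoint_union_left.mpr ⟨hac, hbc⟩),
      Finset.card_union_of_disjoint hab, a.2, b.2, c.2]
  have hle := hcard ▸ Finset.card_le_univ (a.1 ∪ b.1 ∪ c.1)
  simp at hle

theorem petersen_exists_path_three_of_not_adj :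
    ∀ u v : KVertex, u ≠ v → ¬ petersen.Adj u v →
      ∃ x y, petersen.Adj v x ∧ petersen.Adj x y ∧ petersen.Adj y u := by
  decide

/-- Every graph homomorphism from the Petersen graph to itself is a
graph automorphism: if `f : V(Γ) → V(Γ)` sends adjacent pairs to adjacent pairs, then
`f` is a bijection and `f(u) ∼ f(v)` if and only if `u ∼ v`. -/
theorem petersen_hom_is_aut (f : KVertex → KVertex)
    (hf : ∀ u v : KVertex, petersen.Adj u v → petersen.Adj (f u) (f v)) :
    Function.Bijective f ∧
    (∀ u v : KVertex, petersen.Adj (f u) (f v) ↔ petersen.Adj u v) := by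
  let φ : petersen →g petersen := ⟨f, hf _ _⟩
  have hinj : Function.Injective f :=
    φ.injective_of_cliqueFree_three petersen_cliqueFree_three
      petersen_exists_path_three_of_not_adj
  exact ⟨Finite.injective_iff_bijective.mp hinj, fun u v => φ.adj_iff_of_injective hinj⟩
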